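/- arXiv:2306.05906 — 3 statements merged into one kernel-verified Lean document; each statement's English description precedes it below -/
import Mathlib

section
/- Let d, n ≥ 1, let T > 0, let z₀ ∈ ℝ^d, and let x : ℝ^d × ℝ → ℝ^n be twice continuously differentiable (C²) on an open set containing {z₀} × [0, T]. Assume that the curve t ↦ x(z₀, t) is injective on [0, T] and that the velocity ∂ₜx(z₀, t) ≠ 0 for every t ∈ [0, T]. Then there exists a neighborhood V of z₀ in ℝ^d such that for every z ∈ V the curve t ↦ x(z, t) is injective on [0, T]. -/
/-!
Compactness over the pairs `(a, b) ∈ [0, T]²`, through the tube lemma. Off the diagonal,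
`x (z₀, a) ≠ x (z₀, b)` persists for nearby `(z, a, b)` by continuity. Near a diagonal point
`(s, s)` the velocity `∂ₜx (z, t)` stays within `‖v‖ / 2` of `v = ∂ₜx (z₀, s) ≠ 0`, so the mean
value inequality applied to `t ↦ x (z, t) - t • v` makes each curve injective on a fixed short
interval around `s`, uniformly in `z`.
-/

open Set Filter Metric Topology

theorem Convex.injOn_of_norm_hasDerivWithinAt_sub_le {F : Type*} [NormedAddCommGroup F]
    [NormedSpace ℝ F] {g g' : ℝ → F} {s : Set ℝ} {v : F} {C : ℝ} (hs : Convex ℝ s)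
    (hg : ∀ t ∈ s, HasDerivWithinAt g (g' t) s t) (hbound : ∀ t ∈ s, ‖g' t - v‖ ≤ C)
    (hC : C < ‖v‖) : InjOn g s := by
  intro a ha b hb hab
  have hlin : ∀ t ∈ s, HasDerivWithinAt (fun τ => g τ - τ • v) (g' t - v) s t := fun t ht =>
    (hg t ht).sub (by simpa using (hasDerivWithinAt_id t s).smul_const v)
  have hmv := hs.norm_image_sub_le_of_norm_hasDerivWithin_le hlin hbound hb ha
  have hdiff : g a - a • v - (g b - b • v) = (b - a) • v := by rw [hab, sub_smul]; abel
  rw [hdiff, norm_smul, Real.norm_eq_abs, Real.norm_eq_abs, abs_sub_comm] at hmv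
  by_contra hne
  have : 0 < |a - b| := abs_pos.mpr (sub_ne_zero.mpr hne)
  nlinarith

theorem eventually_eq_imp_eq_of_hasDerivAt {X F : Type*} [TopologicalSpace X]
    [NormedAddCommGroup F] [NormedSpace ℝ F] {x x' : X × ℝ → F} {p₀ : X × ℝ}
    (hx : ∀ᶠ p in 𝓝 p₀, HasDerivAt (fun t => x (p.1, t)) (x' p) p.2)
    (hx' : ContinuousAt x' p₀) (h0 : x' p₀ ≠ 0) :
    ∀ᶠ q in 𝓝 (p₀.1, (p₀.2, p₀.2)), x (q.1, q.2.1) = x (q.1, q.2.2) → q.2.1 = q.2.2 := by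
  have hv := norm_pos_iff.mpr h0
  have hclose : ∀ᶠ p in 𝓝 p₀, ‖x' p - x' p₀‖ ≤ ‖x' p₀‖ / 2 :=
    (hx'.eventually (closedBall_mem_nhds _ (half_pos hv))).mono fun p hp => by
      simpa [dist_eq_norm] using hp
  rw [← Prod.mk.eta (p := p₀), nhds_prod_eq] at hx hclose
  obtain ⟨P, hP, Q, hQ, hPQ⟩ := eventually_prod_iff.mp (hx.and hclose)
  obtain ⟨r, hr, hball⟩ := Metric.eventually_nhds_iff_ball.mp hQ
  have hnear : ∀ᶠ q in 𝓝 (p₀.1, (p₀.2, p₀.2)), P q.1 ∧ q.2 ∈ ball p₀.2 r ×ˢ ball p₀.2 r := by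
    rw [nhds_prod_eq]
    exact (tendsto_fst.eventually hP).and
      (tendsto_snd.eventually (prod_mem_nhds (ball_mem_nhds _ hr) (ball_mem_nhds _ hr)))
  refine hnear.mono fun ⟨z, a, b⟩ ⟨hz, ha, hb⟩ hab => ?_
  exact (convex_ball p₀.2 r).injOn_of_norm_hasDerivWithinAt_sub_le (g := fun t => x (z, t))
    (fun t ht => (hPQ hz (hball t ht)).1.hasDerivWithinAt)
    (fun t ht => (hPQ hz (hball t ht)).2) (half_lt_self hv) ha hb hab

theorem eventually_ne_of_continuousAt {X Y F : Type*} [TopologicalSpace X] [TopologicalSpace Y]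
    [TopologicalSpace F] [T2Space F] {x : X × Y → F} {z₀ : X} {s t : Y}
    (hs : ContinuousAt x (z₀, s)) (ht : ContinuousAt x (z₀, t)) (hne : x (z₀, s) ≠ x (z₀, t)) :
    ∀ᶠ q in 𝓝 (z₀, (s, t)), x (q.1, q.2.1) ≠ x (q.1, q.2.2) :=
  (hs.comp_of_eq (f := fun q : X × Y × Y => (q.1, q.2.1)) (by fun_prop) rfl).ne_iff_eventually_ne
    (ht.comp_of_eq (f := fun q : X × Y × Y => (q.1, q.2.2)) (by fun_prop) rfl) |>.mp hne

theorem HasFDerivAt.hasDerivAt_partial_snd {E F : Type*} [NormedAddCommGroup E]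
    [NormedSpace ℝ E] [NormedAddCommGroup F] [NormedSpace ℝ F] {x : E × ℝ → F}
    {L : E × ℝ →L[ℝ] F} {p : E × ℝ} (hx : HasFDerivAt x L p) :
    HasDerivAt (fun t => x (p.1, t)) (L (0, 1)) p.2 := by
  simpa [Function.comp_def] using (hx.comp p.2 (hasFDerivAt_prodMk_right p.1 p.2)).hasDerivAt

theorem stmt3_general (d n : ℕ) (T : ℝ)
    (z₀ : Fin d → ℝ) (x : (Fin d → ℝ) × ℝ → Fin n → ℝ)
    (U : Set ((Fin d → ℝ) × ℝ)) (hU : IsOpen U)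
    (hsub : ({z₀} : Set (Fin d → ℝ)) ×ˢ Set.Icc (0 : ℝ) T ⊆ U)
    (hx : ContDiffOn ℝ 2 x U)
    (hinj : Set.InjOn (fun t => x (z₀, t)) (Set.Icc 0 T))
    (hvel : ∀ t ∈ Set.Icc (0 : ℝ) T, deriv (fun s => x (z₀, s)) t ≠ 0) :
    ∃ V : Set (Fin d → ℝ), IsOpen V ∧ z₀ ∈ V ∧
      ∀ z ∈ V, Set.InjOn (fun t => x (z, t)) (Set.Icc 0 T) := by
  have hnhds : ∀ t ∈ Icc 0 T, U ∈ 𝓝 (z₀, t) := fun t ht => hU.mem_nhds (hsub ⟨rfl, ht⟩)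
  have hvel_cont : ContinuousOn (fun p => fderiv ℝ x p (0, 1)) U :=
    (hx.continuousOn_fderiv_of_isOpen hU one_le_two).clm_apply continuousOn_const
  have hvel_deriv : ∀ p ∈ U, HasDerivAt (fun t => x (p.1, t)) (fderiv ℝ x p (0, 1)) p.2 :=
    fun p hp => ((hx.contDiffAt (hU.mem_nhds hp)).differentiableAt two_ne_zero).hasFDerivAt
      |>.hasDerivAt_partial_snd
  have hlocal : ∀ st ∈ Icc 0 T ×ˢ Icc 0 T, ∀ᶠ q in 𝓝 (z₀, st),
      x (q.1, q.2.1) = x (q.1, q.2.2) → q.2.1 = q.2.2 := by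
    rintro ⟨s, t⟩ ⟨hs, ht⟩
    rcases eq_or_ne s t with rfl | hst
    · refine eventually_eq_imp_eq_of_hasDerivAt (p₀ := (z₀, s))
        (eventually_of_mem (hnhds s hs) hvel_deriv) (hvel_cont.continuousAt (hnhds s hs)) ?_
      rw [← (hvel_deriv (z₀, s) (hsub ⟨rfl, hs⟩)).deriv]
      exact hvel s hs
    · exact (eventually_ne_of_continuousAt (hx.continuousOn.continuousAt (hnhds s hs))
        (hx.continuousOn.continuousAt (hnhds t ht)) (hinj.ne hs ht hst)).mono
        fun q hq heq => absurd heq hq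
  obtain ⟨V, hV, hVo, hz₀⟩ := _root_.eventually_nhds_iff.mp
    ((isCompact_Icc.prod isCompact_Icc).eventually_forall_of_forall_eventually
      (P := fun z ab => x (z, ab.1) = x (z, ab.2) → ab.1 = ab.2) hlocal)
  exact ⟨V, hVo, hz₀, fun z hz a ha b hb hab => hV z hz (a, b) ⟨ha, hb⟩ hab⟩

/-- Stability of non-self-intersection: if `x : ℝ^d × ℝ → ℝ^n` is `C²` on an open set
containing `{z₀} × [0,T]`, the curve `t ↦ x(z₀,t)` is injective on `[0,T]` and its velocity
`∂ₜx(z₀,t)` never vanishes on `[0,T]`, then for all `z` in some neighborhood of `z₀` the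
curve `t ↦ x(z,t)` is injective on `[0,T]`. -/
theorem stmt3 (d n : ℕ) (hd : 1 ≤ d) (hn : 1 ≤ n) (T : ℝ) (hT : 0 < T)
    (z₀ : Fin d → ℝ) (x : (Fin d → ℝ) × ℝ → Fin n → ℝ)
    (U : Set ((Fin d → ℝ) × ℝ)) (hU : IsOpen U)
    (hsub : ({z₀} : Set (Fin d → ℝ)) ×ˢ Set.Icc (0 : ℝ) T ⊆ U)
    (hx : ContDiffOn ℝ 2 x U)
    (hinj : Set.InjOn (fun t => x (z₀, t)) (Set.Icc 0 T))
    (hvel : ∀ t ∈ Set.Icc (0 : ℝ) T, deriv (fun s => x (z₀, s)) t ≠ 0) :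
    ∃ V : Set (Fin d → ℝ), IsOpen V ∧ z₀ ∈ V ∧
      ∀ z ∈ V, Set.InjOn (fun t => x (z, t)) (Set.Icc 0 T) :=
  stmt3_general d n T z₀ x U hU hsub hx hinj hvel
end

section
/- Let n ≥ 1 and m ∈ ℝ. Let p : ℝ^n × ℝ^n → ℝ be twice continuously differentiable (C²) on ℝ^n × (ℝ^n \ {0}) and positively homogeneous of degree m in the second variable, i.e. p(x, rξ) = r^m p(x, ξ) for all r > 0, x ∈ ℝ^n, ξ ∈ ℝ^n \ {0}. Let I, J ⊆ ℝ be open intervals with 0 ∈ J, and let x, ξ : J × I → ℝ^n be C² maps with ξ(s,t) ≠ 0 for all (s,t), satisfying Hamilton's equations ∂ₜx(s,t) = ∇_ξ p(x(s,t), ξ(s,t)) and ∂ₜξ(s,t) = −∇ₓp(x(s,t), ξ(s,t)), together with the constraint p(x(s,t), ξ(s,t)) = 0 for all (s,t) ∈ J × I. Then the function t ↦ ⟨ξ(0,t), ∂ₛx(s,t)|_{s=0}⟩ is constant on I, where ⟨·,·⟩ is the Euclidean inner product. -/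
/-!
Write `F(t) = ⟪ξ(0,t), ∂ₛx(0,t)⟫`. By Hamilton's equations and symmetry of mixed partials,
`F' = -⟪∇ₓp, ∂ₛx⟫ + ⟪ξ, ∂ₛ∂ₜx⟫`. Euler's identity for the degree-`m` homogeneous `p` gives
`⟪ξ, ∂ₜx⟫ = ⟪ξ, ∇_ξ p⟫ = m p = 0` for every `s`, and differentiating in `s` turns the second
term into `-⟪∂ₛξ, ∇_ξ p⟫`. Hence `F' = -∂ₛ (p(x, ξ)) = 0` because `p` vanishes on the family.
-/

open Set Filter Topology InnerProductSpace

section Gradient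

variable {E F : Type*} [NormedAddCommGroup E] [NormedAddCommGroup F]

lemma inner_gradient_fst_eq_fderiv [InnerProductSpace ℝ E] [CompleteSpace E] [NormedSpace ℝ F]
    {p : E × F → ℝ} {z : E × F} (hp : DifferentiableAt ℝ p z) (v : E) :
    ⟪gradient (fun y => p (y, z.2)) z.1, v⟫_ℝ = fderiv ℝ p z (v, 0) := by
  have hslice : HasFDerivAt (fun y => p (y, z.2)) ((fderiv ℝ p z).comp (.inl ℝ E F)) z.1 :=
    hp.hasFDerivAt.comp z.1 (hasFDerivAt_prodMk_left z.1 z.2)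
  rw [inner_gradient_left, hslice.fderiv]
  rfl

lemma inner_gradient_snd_eq_fderiv [NormedSpace ℝ E] [InnerProductSpace ℝ F] [CompleteSpace F]
    {p : E × F → ℝ} {z : E × F} (hp : DifferentiableAt ℝ p z) (v : F) :
    ⟪gradient (fun η => p (z.1, η)) z.2, v⟫_ℝ = fderiv ℝ p z (0, v) := by
  have hslice : HasFDerivAt (fun η => p (z.1, η)) ((fderiv ℝ p z).comp (.inr ℝ E F)) z.2 :=
    hp.hasFDerivAt.comp z.2 (hasFDerivAt_prodMk_right z.1 z.2)
  rw [inner_gradient_left, hslice.fderiv]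
  rfl

lemma DifferentiableAt.hasDerivAt_comp_prodMk_gradient [InnerProductSpace ℝ E]
    [CompleteSpace E] [InnerProductSpace ℝ F] [CompleteSpace F] {p : E × F → ℝ} {γ : ℝ → E}
    {ζ : ℝ → F} {γ' : E} {ζ' : F} {s : ℝ} (hp : DifferentiableAt ℝ p (γ s, ζ s))
    (hγ : HasDerivAt γ γ' s) (hζ : HasDerivAt ζ ζ' s) :
    HasDerivAt (fun s => p (γ s, ζ s))
      (⟪gradient (fun y => p (y, ζ s)) (γ s), γ'⟫_ℝ
        + ⟪gradient (fun η => p (γ s, η)) (ζ s), ζ'⟫_ℝ) s := by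
  have hchain := hp.hasFDerivAt.comp_hasDerivAt s (hγ.prodMk hζ)
  rw [← Prod.fst_add_snd (γ', ζ'), map_add] at hchain
  rwa [inner_gradient_fst_eq_fderiv hp, inner_gradient_snd_eq_fderiv hp]

lemma fderiv_apply_snd_eq_mul_of_homogeneous [NormedSpace ℝ E] [NormedSpace ℝ F]
    {p : E × F → ℝ} {m : ℝ} {y : E} {η : F} (hp : DifferentiableAt ℝ p (y, η))
    (hhom : ∀ r : ℝ, 0 < r → p (y, r • η) = r ^ m * p (y, η)) :
    fderiv ℝ p (y, η) (0, η) = m * p (y, η) := by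
  have hray : HasDerivAt (fun r : ℝ => p (y, r • η)) (fderiv ℝ p (y, η) (0, η)) 1 :=
    hp.hasFDerivAt.comp_hasDerivAt_of_eq 1
      ((hasDerivAt_const 1 y).prodMk (by simpa using (hasDerivAt_id (1 : ℝ)).smul_const η))
      (by simp)
  have hpow : HasDerivAt (fun r : ℝ => r ^ m * p (y, η)) (m * p (y, η)) 1 := by
    simpa using (Real.hasDerivAt_rpow_const (p := m) (Or.inl one_ne_zero)).mul_const (p (y, η))
  refine hray.unique (hpow.congr_of_eventuallyEq ?_)
  filter_upwards [Ioi_mem_nhds one_pos] with r hr using hhom r hr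

lemma inner_gradient_snd_self_eq_mul_of_homogeneous [NormedSpace ℝ E] [InnerProductSpace ℝ F]
    [CompleteSpace F] {p : E × F → ℝ} {m : ℝ} {y : E} {η : F} (hp : DifferentiableAt ℝ p (y, η))
    (hhom : ∀ r : ℝ, 0 < r → p (y, r • η) = r ^ m * p (y, η)) :
    ⟪gradient (fun η' => p (y, η')) η, η⟫_ℝ = m * p (y, η) := by
  rw [inner_gradient_snd_eq_fderiv (z := (y, η)) hp, fderiv_apply_snd_eq_mul_of_homogeneous hp hhom]

end Gradient

section Slices

variable {E : Type*} [NormedAddCommGroup E] [NormedSpace ℝ E] {f : ℝ × ℝ → E} {s₀ t₀ : ℝ}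

lemma DifferentiableAt.hasDerivAt_slice_fst (hf : DifferentiableAt ℝ f (s₀, t₀)) :
    HasDerivAt (fun s => f (s, t₀)) (fderiv ℝ f (s₀, t₀) (1, 0)) s₀ :=
  hf.hasFDerivAt.comp_hasDerivAt s₀ ((hasDerivAt_id s₀).prodMk (hasDerivAt_const s₀ t₀))

lemma DifferentiableAt.hasDerivAt_slice_snd (hf : DifferentiableAt ℝ f (s₀, t₀)) :
    HasDerivAt (fun t => f (s₀, t)) (fderiv ℝ f (s₀, t₀) (0, 1)) t₀ :=
  hf.hasFDerivAt.comp_hasDerivAt t₀ ((hasDerivAt_const t₀ s₀).prodMk (hasDerivAt_id t₀))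

lemma ContDiffAt.eventually_differentiableAt (hf : ContDiffAt ℝ 2 f (s₀, t₀)) :
    ∀ᶠ y in 𝓝 (s₀, t₀), DifferentiableAt ℝ f y :=
  (hf.eventually (by simp)).mono fun _ hy => hy.differentiableAt two_ne_zero

lemma ContDiffAt.differentiableAt_fderiv (hf : ContDiffAt ℝ 2 f (s₀, t₀)) :
    DifferentiableAt ℝ (fderiv ℝ f) (s₀, t₀) :=
  (hf.fderiv_right (m := 1) (by norm_num)).differentiableAt one_ne_zero

lemma ContDiffAt.hasDerivAt_deriv_slice_fst (hf : ContDiffAt ℝ 2 f (s₀, t₀)) :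
    HasDerivAt (fun t => deriv (fun s => f (s, t)) s₀)
      (fderiv ℝ (fderiv ℝ f) (s₀, t₀) (0, 1) (1, 0)) t₀ := by
  have hD := hf.differentiableAt_fderiv.hasDerivAt_slice_snd.clm_apply (hasDerivAt_const t₀ (1, 0))
  refine (by simpa using hD : HasDerivAt (fun t => fderiv ℝ f (s₀, t) (1, 0)) _ t₀)
    |>.congr_of_eventuallyEq ?_
  have hslice : Tendsto (fun t => (s₀, t)) (𝓝 t₀) (𝓝 (s₀, t₀)) :=
    (continuous_const.prodMk continuous_id).tendsto' _ _ rfl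
  filter_upwards [hslice.eventually hf.eventually_differentiableAt] with t ht
  exact ht.hasDerivAt_slice_fst.deriv

lemma ContDiffAt.hasDerivAt_deriv_slice_snd (hf : ContDiffAt ℝ 2 f (s₀, t₀)) :
    HasDerivAt (fun s => deriv (fun t => f (s, t)) t₀)
      (fderiv ℝ (fderiv ℝ f) (s₀, t₀) (0, 1) (1, 0)) s₀ := by
  have hD := hf.differentiableAt_fderiv.hasDerivAt_slice_fst.clm_apply (hasDerivAt_const s₀ (0, 1))
  rw [hf.isSymmSndFDerivAt (by simp) (0, 1) (1, 0)]
  refine (by simpa using hD : HasDerivAt (fun s => fderiv ℝ f (s, t₀) (0, 1)) _ s₀)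
    |>.congr_of_eventuallyEq ?_
  have hslice : Tendsto (fun s => (s, t₀)) (𝓝 s₀) (𝓝 (s₀, t₀)) :=
    (continuous_id.prodMk continuous_const).tendsto' _ _ rfl
  filter_upwards [hslice.eventually hf.eventually_differentiableAt] with s hs
  exact hs.hasDerivAt_slice_snd.deriv

end Slices

lemma HasDerivAt.eq_zero_of_eventuallyEq_zero {F : Type*} [NormedAddCommGroup F] [NormedSpace ℝ F]
    {g : ℝ → F} {g' : F} {s : ℝ} (hg : HasDerivAt g g' s) (hzero : g =ᶠ[𝓝 s] 0) : g' = 0 :=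
  hg.unique ((hasDerivAt_const s 0).congr_of_eventuallyEq hzero)

section Bicharacteristic

variable {E : Type*} [NormedAddCommGroup E] [InnerProductSpace ℝ E] [CompleteSpace E]
  {p : E × E → ℝ} {x ξ : ℝ × ℝ → E} {s₀ t₀ : ℝ}

lemma hasDerivAt_inner_deriv_slice_eq_zero (hx : ContDiffAt ℝ 2 x (s₀, t₀))
    (hξ : DifferentiableAt ℝ ξ (s₀, t₀)) (hp : DifferentiableAt ℝ p (x (s₀, t₀), ξ (s₀, t₀)))
    (ham1 : deriv (fun t => x (s₀, t)) t₀ = gradient (fun η => p (x (s₀, t₀), η)) (ξ (s₀, t₀)))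
    (ham2 : deriv (fun t => ξ (s₀, t)) t₀ = -gradient (fun y => p (y, ξ (s₀, t₀))) (x (s₀, t₀)))
    (hnull : ∀ᶠ s in 𝓝 s₀, p (x (s, t₀), ξ (s, t₀)) = 0)
    (horth : ∀ᶠ s in 𝓝 s₀, ⟪ξ (s, t₀), deriv (fun t => x (s, t)) t₀⟫_ℝ = 0) :
    HasDerivAt (fun t => ⟪ξ (s₀, t), deriv (fun s => x (s, t)) s₀⟫_ℝ) 0 t₀ := by
  have hxs : HasDerivAt (fun s => x (s, t₀)) (deriv (fun s => x (s, t₀)) s₀) s₀ :=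
    (hx.differentiableAt two_ne_zero).hasDerivAt_slice_fst.differentiableAt.hasDerivAt
  have hξs : HasDerivAt (fun s => ξ (s, t₀)) (deriv (fun s => ξ (s, t₀)) s₀) s₀ :=
    hξ.hasDerivAt_slice_fst.differentiableAt.hasDerivAt
  have hξt : HasDerivAt (fun t => ξ (s₀, t)) (deriv (fun t => ξ (s₀, t)) t₀) t₀ :=
    hξ.hasDerivAt_slice_snd.differentiableAt.hasDerivAt
  have horth_deriv := (hξs.inner ℝ hx.hasDerivAt_deriv_slice_snd).eq_zero_of_eventuallyEq_zero horth
  have hnull_deriv := (hp.hasDerivAt_comp_prodMk_gradient hxs hξs).eq_zero_of_eventuallyEq_zero hnull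
  refine (hξt.inner ℝ hx.hasDerivAt_deriv_slice_fst).congr_deriv ?_
  rw [ham1] at horth_deriv
  rw [real_inner_comm (deriv (fun s => ξ (s, t₀)) s₀)] at hnull_deriv
  rw [ham2, inner_neg_left]
  linarith

end Bicharacteristic

theorem stmt4_general (n : ℕ) (m : ℝ)
    (p : EuclideanSpace ℝ (Fin n) × EuclideanSpace ℝ (Fin n) → ℝ)
    (hp : ContDiffOn ℝ 2 p {q : EuclideanSpace ℝ (Fin n) × EuclideanSpace ℝ (Fin n) | q.2 ≠ 0})
    (hhom : ∀ r : ℝ, 0 < r → ∀ x ξ : EuclideanSpace ℝ (Fin n), ξ ≠ 0 →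
      p (x, r • ξ) = r ^ m * p (x, ξ))
    (a b c d : ℝ) (hJ0 : (0 : ℝ) ∈ Set.Ioo a b)
    (x ξ : ℝ × ℝ → EuclideanSpace ℝ (Fin n))
    (hx : ContDiffOn ℝ 2 x (Set.Ioo a b ×ˢ Set.Ioo c d))
    (hξ : ContDiffOn ℝ 2 ξ (Set.Ioo a b ×ˢ Set.Ioo c d))
    (hξne : ∀ s ∈ Set.Ioo a b, ∀ t ∈ Set.Ioo c d, ξ (s, t) ≠ 0)
    (ham1 : ∀ s ∈ Set.Ioo a b, ∀ t ∈ Set.Ioo c d,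
      deriv (fun t' => x (s, t')) t = gradient (fun η => p (x (s, t), η)) (ξ (s, t)))
    (ham2 : ∀ s ∈ Set.Ioo a b, ∀ t ∈ Set.Ioo c d,
      deriv (fun t' => ξ (s, t')) t = - gradient (fun y => p (y, ξ (s, t))) (x (s, t)))
    (hnull : ∀ s ∈ Set.Ioo a b, ∀ t ∈ Set.Ioo c d, p (x (s, t), ξ (s, t)) = 0) :
    ∀ t₁ ∈ Set.Ioo c d, ∀ t₂ ∈ Set.Ioo c d,
      (inner ℝ (ξ (0, t₁)) (deriv (fun s => x (s, t₁)) 0) : ℝ) =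
      (inner ℝ (ξ (0, t₂)) (deriv (fun s => x (s, t₂)) 0) : ℝ) := by
  have hpd : ∀ s ∈ Ioo a b, ∀ t ∈ Ioo c d, DifferentiableAt ℝ p (x (s, t), ξ (s, t)) :=
    fun s hs t ht => (hp.contDiffAt ((isOpen_compl_singleton.preimage continuous_snd).mem_nhds
      (hξne s hs t ht))).differentiableAt two_ne_zero
  have hderiv : ∀ t ∈ Ioo c d,
      HasDerivAt (fun t => ⟪ξ (0, t), deriv (fun s => x (s, t)) 0⟫_ℝ) 0 t := by
    intro t ht
    have hU : Ioo a b ×ˢ Ioo c d ∈ 𝓝 ((0 : ℝ), t) :=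
      (isOpen_Ioo.prod isOpen_Ioo).mem_nhds ⟨hJ0, ht⟩
    refine hasDerivAt_inner_deriv_slice_eq_zero (hx.contDiffAt hU)
      ((hξ.contDiffAt hU).differentiableAt two_ne_zero) (hpd 0 hJ0 t ht) (ham1 0 hJ0 t ht)
      (ham2 0 hJ0 t ht) ?_ ?_
    · filter_upwards [isOpen_Ioo.mem_nhds hJ0] with s hs using hnull s hs t ht
    · filter_upwards [isOpen_Ioo.mem_nhds hJ0] with s hs
      rw [ham1 s hs t ht, real_inner_comm, inner_gradient_snd_self_eq_mul_of_homogeneous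
        (hpd s hs t ht) (fun r hr => hhom r hr _ _ (hξne s hs t ht)), hnull s hs t ht, mul_zero]
  intro t₁ ht₁ t₂ ht₂
  exact isOpen_Ioo.is_const_of_deriv_eq_zero isPreconnected_Ioo
    (fun t ht => (hderiv t ht).differentiableAt.differentiableWithinAt)
    (fun t ht => (hderiv t ht).deriv) ht₁ ht₂

/-- For a Hamiltonian `p(x,ξ)` that is `C²` away from `ξ = 0` and positively homogeneous of
degree `m` in `ξ`, and a `C²` family `(s,t) ↦ (x(s,t), ξ(s,t))` of null bicharacteristics
(solutions of Hamilton's equations with `p = 0` along them), the pairing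
`⟨ξ(0,t), ∂ₛx(s,t)|_{s=0}⟩` is constant in `t`. -/
theorem stmt4 (n : ℕ) (hn : 1 ≤ n) (m : ℝ)
    (p : EuclideanSpace ℝ (Fin n) × EuclideanSpace ℝ (Fin n) → ℝ)
    (hp : ContDiffOn ℝ 2 p {q : EuclideanSpace ℝ (Fin n) × EuclideanSpace ℝ (Fin n) | q.2 ≠ 0})
    (hhom : ∀ r : ℝ, 0 < r → ∀ x ξ : EuclideanSpace ℝ (Fin n), ξ ≠ 0 →
      p (x, r • ξ) = r ^ m * p (x, ξ))
    (a b c d : ℝ) (hJ0 : (0 : ℝ) ∈ Set.Ioo a b)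
    (x ξ : ℝ × ℝ → EuclideanSpace ℝ (Fin n))
    (hx : ContDiffOn ℝ 2 x (Set.Ioo a b ×ˢ Set.Ioo c d))
    (hξ : ContDiffOn ℝ 2 ξ (Set.Ioo a b ×ˢ Set.Ioo c d))
    (hξne : ∀ s ∈ Set.Ioo a b, ∀ t ∈ Set.Ioo c d, ξ (s, t) ≠ 0)
    (ham1 : ∀ s ∈ Set.Ioo a b, ∀ t ∈ Set.Ioo c d,
      deriv (fun t' => x (s, t')) t = gradient (fun η => p (x (s, t), η)) (ξ (s, t)))
    (ham2 : ∀ s ∈ Set.Ioo a b, ∀ t ∈ Set.Ioo c d,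
      deriv (fun t' => ξ (s, t')) t = - gradient (fun y => p (y, ξ (s, t))) (x (s, t)))
    (hnull : ∀ s ∈ Set.Ioo a b, ∀ t ∈ Set.Ioo c d, p (x (s, t), ξ (s, t)) = 0) :
    ∀ t₁ ∈ Set.Ioo c d, ∀ t₂ ∈ Set.Ioo c d,
      (inner ℝ (ξ (0, t₁)) (deriv (fun s => x (s, t₁)) 0) : ℝ) =
      (inner ℝ (ξ (0, t₂)) (deriv (fun s => x (s, t₂)) 0) : ℝ) :=
  stmt4_general n m p hp hhom a b c d hJ0 x ξ hx hξ hξne ham1 ham2 hnull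
end

section
/- Let T₁, T₂, T₃ be metric spaces, let C ⊆ T₁ × T₂ × T₃ be a subset, and let G : T₁ × T₂ → T₃ be a continuous map such that η = G(a, x) for every (a, x, η) ∈ C. Let ĉ = (â, x̂, η̂) ∈ C and suppose there is an open neighborhood W of ĉ in T₁ × T₂ × T₃ such that the projection (a, x, η) ↦ a is injective on C ∩ W. Then there exist open neighborhoods 𝒱 of â in T₁ and U of x̂ in T₂ such that the projection (a, x, η) ↦ a is injective on the set {(a, x, η) ∈ C : a ∈ 𝒱, x ∈ U}. -/
/-- Upgrading local injectivity of the first projection: if `C ⊆ T₁ × T₂ × T₃`, the third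
component of points of `C` is given by a continuous function `G` of the first two, and the
projection `(a,x,η) ↦ a` is injective on `C ∩ W` for some open neighborhood `W` of
`ĉ = (â,x̂,η̂) ∈ C`, then there are open neighborhoods `𝒱` of `â` and `U` of `x̂` such that
the projection is injective on `{(a,x,η) ∈ C : a ∈ 𝒱, x ∈ U}`. -/
theorem stmt12 {T₁ T₂ T₃ : Type*} [MetricSpace T₁] [MetricSpace T₂] [MetricSpace T₃]
    (C : Set (T₁ × T₂ × T₃)) (G : T₁ × T₂ → T₃) (hG : Continuous G)
    (hGC : ∀ c ∈ C, c.2.2 = G (c.1, c.2.1))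
    (c₀ : T₁ × T₂ × T₃) (hc₀ : c₀ ∈ C)
    (W : Set (T₁ × T₂ × T₃)) (hW : IsOpen W) (hc₀W : c₀ ∈ W)
    (hinj : Set.InjOn Prod.fst (C ∩ W)) :
    ∃ (V : Set T₁) (U : Set T₂), IsOpen V ∧ IsOpen U ∧ c₀.1 ∈ V ∧ c₀.2.1 ∈ U ∧
      Set.InjOn Prod.fst {c ∈ C | c.1 ∈ V ∧ c.2.1 ∈ U} := by
  set F : T₁ × T₂ → T₁ × T₂ × T₃ := fun p => (p.1, p.2, G p) with hF
  have hFcont : Continuous F := by fun_prop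
  have hopen : IsOpen (F ⁻¹' W) := hW.preimage hFcont
  have hmem : (c₀.1, c₀.2.1) ∈ F ⁻¹' W := by
    have : F (c₀.1, c₀.2.1) = c₀ := by
      simp [hF, ← hGC c₀ hc₀]
    simpa [Set.mem_preimage, this] using hc₀W
  obtain ⟨V, U, hV, hU, haV, hxU, hVU⟩ := isOpen_prod_iff.mp hopen _ _ hmem
  refine ⟨V, U, hV, hU, haV, hxU, ?_⟩
  have key : ∀ c ∈ {c ∈ C | c.1 ∈ V ∧ c.2.1 ∈ U}, c ∈ C ∩ W := by
    rintro c ⟨hcC, hcV, hcU⟩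
    refine ⟨hcC, ?_⟩
    have : F (c.1, c.2.1) = c := by
      simp [hF, ← hGC c hcC]
    have hmem' : (c.1, c.2.1) ∈ F ⁻¹' W := hVU (Set.mk_mem_prod hcV hcU)
    simpa [Set.mem_preimage, this] using hmem'
  exact fun a ha b hb h => hinj (key a ha) (key b hb) h
end
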